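/- Let g be a nonzero complex nilpotent Lie algebra of dimension n that is not abelian. Then α(g) ≤ n − 1 and (√(8n+1) − 1)/2 ≤ α(g). -/

import Mathlib

/-!
Let `A` be an abelian ideal of the nilpotent Lie algebra `L` that is maximal among abelian ideals,
and `m = dim A`. Nilpotency forces `A` to be its own centralizer: otherwise some `x` centralizing
`A` but outside it is central modulo `A`, and `A + Kx` is a larger abelian ideal. Hence the
action `L → End A` has kernel `A`, so its image has dimension `n - m`.

The image of a nilpotent representation `ρ` on an `m`-dimensional space `V` has dimension at most
`m(m-1)/2`, by induction on `m`: `ρ` maps `V` into the proper submodule `W = [L, V]`, so `ρ x` is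
determined by its restriction to `W` and by a map from a complement of `W` into `W`, whence
`dim ρ(L) ≤ dim ρ_W(L) + (m - dim W) dim W`.

Thus `n ≤ m(m+1)/2` with `m ≤ α(L)`. The upper bound holds because an abelian subalgebra of
dimension `n` is all of `L`.
-/

open Module

noncomputable def alphaInv (K L : Type*) [Field K] [LieRing L] [LieAlgebra K L] : ℕ :=
  sSup {n | ∃ a : LieSubalgebra K L, IsLieAbelian a ∧ finrank K a = n}

noncomputable def betaInv (K L : Type*) [Field K] [LieRing L] [LieAlgebra K L] : ℕ :=
  sSup {n | ∃ I : LieIdeal K L, IsLieAbelian I ∧ finrank K I = n}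

namespace LinearMap

variable {K L V W : Type*} [Field K] [AddCommGroup L] [Module K L] [FiniteDimensional K L]
  [AddCommGroup V] [Module K V] [AddCommGroup W] [Module K W]

theorem finrank_range_le_of_ker_le {f : L →ₗ[K] V} {g : L →ₗ[K] W} (h : ker g ≤ ker f) :
    finrank K (range f) ≤ finrank K (range g) := by
  have := f.finrank_range_add_finrank_ker
  have := g.finrank_range_add_finrank_ker
  have := Submodule.finrank_mono h
  omega

theorem finrank_range_prod_le (f : L →ₗ[K] V) (g : L →ₗ[K] W) :
    finrank K (range (f.prod g)) ≤ finrank K (range f) + finrank K (range g) := by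
  have := (f.prod g).finrank_range_add_finrank_ker
  have := f.finrank_range_add_finrank_ker
  have := g.finrank_range_add_finrank_ker
  have := Submodule.finrank_sup_add_finrank_inf_eq (ker f) (ker g)
  have := Submodule.finrank_le (ker f ⊔ ker g)
  rw [ker_prod] at *
  omega

theorem finrank_range_le_of_forall_apply_mem [FiniteDimensional K V] {W : Submodule K V}
    (f : L →ₗ[K] Module.End K V) (g : L →ₗ[K] Module.End K W)
    (hf : ∀ x v, f x v ∈ W) (hg : ∀ x w, (g x w : V) = f x w) :
    finrank K (range f) ≤ finrank K (range g) + (finrank K V - finrank K W) * finrank K W := by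
  obtain ⟨U, hWU⟩ := W.exists_isCompl
  let θ : L →ₗ[K] U →ₗ[K] W :=
    { toFun x := (f x ∘ₗ U.subtype).codRestrict W fun u => hf x u
      map_add' x y := by ext u; exact LinearMap.congr_fun (map_add f x y) u
      map_smul' c x := by ext u; exact LinearMap.congr_fun (map_smul f c x) u }
  have hker : ker (g.prod θ) ≤ ker f := by
    intro x hx
    simp only [ker_prod, Submodule.mem_inf, mem_ker] at hx ⊢
    refine ext_on_codisjoint hWU.codisjoint (fun w hw => ?_) (fun u hu => ?_)
    · rw [zero_apply, ← hg x ⟨w, hw⟩, hx.1, zero_apply, Submodule.coe_zero]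
    · exact congr(($(hx.2) ⟨u, hu⟩ : V))
  have hU : finrank K U = finrank K V - finrank K W := by
    have := Submodule.finrank_add_eq_of_isCompl hWU
    omega
  calc finrank K (range f) ≤ finrank K (range (g.prod θ)) := finrank_range_le_of_ker_le hker
    _ ≤ finrank K (range g) + finrank K (range θ) := finrank_range_prod_le g θ
    _ ≤ finrank K (range g) + finrank K (U →ₗ[K] W) := by gcongr; exact Submodule.finrank_le _
    _ = _ := by rw [finrank_linearMap, hU]

end LinearMap

namespace LieSubmodule

variable {R L M : Type*} [CommRing R] [LieRing L] [LieAlgebra R L] [AddCommGroup M] [Module R M]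
  [LieRingModule L M] [LieModule R L M]

instance instIsNilpotent [LieModule.IsNilpotent L M] (N : LieSubmodule R L M) :
    LieModule.IsNilpotent L N :=
  have : LieModule.IsNilpotent L (⊤ : LieSubmodule R L M) :=
    LieModule.isNilpotent_of_top_iff'.2 ‹_›
  LieModule.isNilpotent_of_le R L M N ⊤ le_top

theorem le_of_inf_normalizer_le [LieModule.IsNilpotent L M] {N P : LieSubmodule R L M}
    (h : P ⊓ N.normalizer ≤ N) : P ≤ N := by
  have hucs : ∀ k, P ⊓ N.ucs k ≤ N := by
    intro k
    induction k with
    | zero => simp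
    | succ k ih =>
      intro x hx
      rw [mem_inf, ucs_succ, mem_normalizer] at hx
      exact h ⟨hx.1, (mem_normalizer _ _).2 fun y => ih ⟨P.lie_mem hx.1, hx.2 y⟩⟩
  obtain ⟨k, hk⟩ := (LieModule.isNilpotent_iff_exists_ucs_eq_top R).mp ‹_›
  have htop : N.ucs k = ⊤ := eq_top_iff.2 (hk ▸ ucs_mono k bot_le)
  simpa [htop] using hucs k

def supSpanSingleton (N : LieSubmodule R L M) {x : M} (hx : x ∈ N.normalizer) :
    LieSubmodule R L M where
  toSubmodule := N.toSubmodule ⊔ R ∙ x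
  lie_mem {y v} hv := by
    obtain ⟨n, hn, _, hs, rfl⟩ := Submodule.mem_sup.1 hv
    obtain ⟨s, rfl⟩ := Submodule.mem_span_singleton.1 hs
    rw [lie_add, lie_smul]
    exact Submodule.mem_sup_left
      (N.add_mem (N.lie_mem hn) (N.smul_mem s ((mem_normalizer _ _).1 hx y)))

end LieSubmodule

namespace LieModule

variable {K L : Type*} [Field K] [LieRing L] [LieAlgebra K L]

theorem lowerCentralSeries_one_ne_top (M : Type*) [AddCommGroup M] [Module K M]
    [LieRingModule L M] [LieModule K L M] [Nontrivial M] [IsNilpotent L M] :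
    lowerCentralSeries K L M 1 ≠ ⊤ := by
  intro h
  have hall : ∀ k, lowerCentralSeries K L M k = ⊤ := by
    intro k
    induction k with
    | zero => rfl
    | succ k ih => rw [lowerCentralSeries_succ, ih]; exact h
  obtain ⟨k, hk⟩ := IsNilpotent.nilpotent K L M
  exact top_ne_bot ((hall k).symm.trans hk)

theorem two_mul_finrank_range_toEnd_add_finrank_le [FiniteDimensional K L] (V : Type*)
    [AddCommGroup V] [Module K V] [LieRingModule L V] [LieModule K L V] [FiniteDimensional K V]
    [IsNilpotent L V] :
    2 * finrank K (LinearMap.range (toEnd K L V : L →ₗ[K] Module.End K V)) + finrank K V ≤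
      finrank K V * finrank K V := by
  induction hm : finrank K V using Nat.strong_induction_on generalizing V with
  | _ m ih =>
  rcases subsingleton_or_nontrivial V with hV | hV
  · have : finrank K (Module.End K V) = 0 := finrank_zero_of_subsingleton
    have := Submodule.finrank_le (LinearMap.range (toEnd K L V : L →ₗ[K] Module.End K V))
    have : m = 0 := hm ▸ finrank_zero_of_subsingleton
    omega
  set W := lowerCentralSeries K L V 1
  have hw : finrank K W < m := hm ▸ Submodule.finrank_lt
    ((LieSubmodule.toSubmodule_eq_top W).not.2 (lowerCentralSeries_one_ne_top V))
  have hW := ih _ hw W rfl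
  have hf := LinearMap.finrank_range_le_of_forall_apply_mem (W := W.toSubmodule)
    (toEnd K L V : L →ₗ[K] Module.End K V) (toEnd K L W)
    (fun x v => by simpa [W] using iterate_toEnd_mem_lowerCentralSeries K L V x v 1) fun _ _ => rfl
  have key : ∀ rf rg w : ℕ, w < m → rf ≤ rg + (m - w) * w → 2 * rg + w ≤ w * w →
      2 * rf + m ≤ m * m := by
    intro rf rg w hwm hf hg
    obtain ⟨q, rfl⟩ := Nat.exists_eq_add_of_lt hwm
    rw [add_assoc, Nat.add_sub_cancel_left] at hf
    nlinarith
  exact key _ _ _ hw (hm ▸ hf) hW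

end LieModule

namespace LieIdeal

variable {R L : Type*} [CommRing R] [LieRing L] [LieAlgebra R L]

theorem isLieAbelian_supSpanSingleton {A : LieIdeal R L} [IsLieAbelian A] {x : L}
    (hxN : x ∈ A.normalizer) (hxA : x ∈ LieModule.ker R L A) :
    IsLieAbelian (A.supSpanSingleton hxN) := by
  have hA : ∀ a ∈ A, ∀ b ∈ A, ⁅a, b⁆ = 0 := fun a ha b hb =>
    congr_arg Subtype.val (trivial_lie_zero A A ⟨a, ha⟩ ⟨b, hb⟩)
  have hxA : ∀ a ∈ A, ⁅x, a⁆ = 0 := fun a ha =>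
    congr_arg Subtype.val ((LieModule.mem_ker R L A x).1 hxA ⟨a, ha⟩)
  have hmem : ∀ u ∈ A.supSpanSingleton hxN, ∃ a ∈ A, ∃ s : R, u = a + s • x := by
    intro u hu
    obtain ⟨a, ha, _, hs, rfl⟩ := Submodule.mem_sup.1 hu
    obtain ⟨s, rfl⟩ := Submodule.mem_span_singleton.1 hs
    exact ⟨a, ha, s, rfl⟩
  refine ⟨fun ⟨u, hu⟩ ⟨v, hv⟩ => Subtype.ext ?_⟩
  obtain ⟨a, ha, s, rfl⟩ := hmem u hu
  obtain ⟨b, hb, t, rfl⟩ := hmem v hv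
  have hax : ⁅a, x⁆ = 0 := by rw [← lie_skew, hxA a ha, neg_zero]
  simp [lie_add, add_lie, lie_smul, smul_lie, hA a ha b hb, hxA b hb, hax]

theorem ker_eq_self_of_maximal_isLieAbelian [LieRing.IsNilpotent L] {A : LieIdeal R L}
    (hA : Maximal (fun I : LieIdeal R L => IsLieAbelian I) A) : LieModule.ker R L A = A := by
  have := hA.1
  refine le_antisymm (LieSubmodule.le_of_inf_normalizer_le fun x ⟨hxK, hxN⟩ => ?_)
    ((isLieAbelian_iff R L).1 hA.1)
  exact hA.2 (isLieAbelian_supSpanSingleton hxN hxK) (le_sup_left : A.toSubmodule ≤ _)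
    (Submodule.mem_sup_right (Submodule.mem_span_singleton_self x))

variable (R L) in
theorem exists_maximal_isLieAbelian [IsNoetherian R L] :
    ∃ A : LieIdeal R L, Maximal (fun I : LieIdeal R L => IsLieAbelian I) A := by
  have hbot : IsLieAbelian (⊥ : LieIdeal R L) := inferInstance
  obtain ⟨A, hA, hmax⟩ := wellFounded_gt.has_min {I : LieIdeal R L | IsLieAbelian I} ⟨⊥, hbot⟩
  exact ⟨A, hA, fun B hB hAB => not_lt_iff_le_imp_ge.1 (hmax B hB) hAB⟩

end LieIdeal

section Field

variable {K L : Type*} [Field K] [LieRing L] [LieAlgebra K L] [FiniteDimensional K L]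

theorem two_mul_finrank_le_of_maximal_isLieAbelian [LieRing.IsNilpotent L] {A : LieIdeal K L}
    (hA : Maximal (fun I : LieIdeal K L => IsLieAbelian I) A) :
    2 * finrank K L ≤ finrank K A * finrank K A + finrank K A := by
  have hrank := (LieModule.toEnd K L A : L →ₗ[K] Module.End K A).finrank_range_add_finrank_ker
  have hker : LinearMap.ker (LieModule.toEnd K L A : L →ₗ[K] Module.End K A) = A.toSubmodule :=
    congr_arg LieSubmodule.toSubmodule (LieIdeal.ker_eq_self_of_maximal_isLieAbelian hA)
  rw [hker, show finrank K A.toSubmodule = finrank K A from rfl] at hrank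
  have := LieModule.two_mul_finrank_range_toEnd_add_finrank_le (K := K) (L := L) A
  omega

theorem finrank_le_alphaInv (a : LieSubalgebra K L) (ha : IsLieAbelian a) :
    finrank K a ≤ alphaInv K L :=
  le_csSup ⟨finrank K L, by rintro _ ⟨b, -, rfl⟩; exact Submodule.finrank_le _⟩ ⟨a, ha, rfl⟩

theorem alphaInv_le_finrank_sub_one (hL : ¬ IsLieAbelian L) : alphaInv K L ≤ finrank K L - 1 := by
  refine csSup_le' ?_
  rintro _ ⟨a, ha, rfl⟩
  refine Nat.le_sub_one_of_lt ((Submodule.finrank_le a.toSubmodule).lt_of_ne fun h => ?_)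
  obtain rfl : a = ⊤ :=
    (LieSubalgebra.toSubmodule_eq_top a).1 (Submodule.eq_top_of_finrank_eq h)
  exact hL ((lie_abelian_iff_equiv_lie_abelian LieSubalgebra.topEquiv).1 ha)

end Field

theorem sqrt_eight_mul_add_one_sub_one_div_two_le {n m : ℕ} (h : 2 * n ≤ m * m + m) :
    (√(8 * n + 1) - 1) / 2 ≤ (m : ℝ) := by
  have h : (8 * n + 1 : ℝ) ≤ (2 * m + 1) ^ 2 := by
    have : (2 * n : ℝ) ≤ m * m + m := by exact_mod_cast h
    nlinarith
  have := Real.sqrt_le_sqrt h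
  rw [Real.sqrt_sq (by positivity)] at this
  linarith

theorem stmt_10_general (L : Type*) [LieRing L] [LieAlgebra ℂ L] [FiniteDimensional ℂ L]
    [LieRing.IsNilpotent L] (hna : ¬ IsLieAbelian L)
    (n : ℕ) (hn : finrank ℂ L = n) :
    alphaInv ℂ L ≤ n - 1 ∧
      (Real.sqrt (8 * n + 1) - 1) / 2 ≤ (alphaInv ℂ L : ℝ) := by
  subst hn
  refine ⟨alphaInv_le_finrank_sub_one hna, ?_⟩
  obtain ⟨A, hA⟩ := LieIdeal.exists_maximal_isLieAbelian ℂ L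
  calc (√(8 * finrank ℂ L + 1) - 1) / 2
      ≤ finrank ℂ A := sqrt_eight_mul_add_one_sub_one_div_two_le
        (two_mul_finrank_le_of_maximal_isLieAbelian hA)
    _ ≤ alphaInv ℂ L := by exact_mod_cast finrank_le_alphaInv (A : LieSubalgebra ℂ L) hA.1

/-- Bounds on α for a nonzero non-abelian complex nilpotent Lie algebra of dimension n. -/
theorem stmt_10 (L : Type*) [LieRing L] [LieAlgebra ℂ L] [FiniteDimensional ℂ L]
    [Nontrivial L] [LieRing.IsNilpotent L] (hna : ¬ IsLieAbelian L)
    (n : ℕ) (hn : finrank ℂ L = n) :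
    alphaInv ℂ L ≤ n - 1 ∧
      (Real.sqrt (8 * n + 1) - 1) / 2 ≤ (alphaInv ℂ L : ℝ) :=
  stmt_10_general L hna n hn
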